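/- Let E ⊂ ℝⁿ be a cone centered at 0 and x ∈ E with |x| = 1. Suppose z_k ∈ E and r_k → 0 are such that (z_k − x)/r_k → z where z is orthogonal to x. Then (|z_k| − 1)/r_k → 0, and consequently (z_k/|z_k| − x)/r_k → z; in particular z belongs to every blow-up limit of E ∩ Sⁿ⁻¹ at x obtained along the sequence r_k. Hence any blow-up limit of E at x (a point of the unit sphere) restricted to the tangent space x^⊥ equals the corresponding blow-up limit of K = E ∩ Sⁿ⁻¹ at x. -/

import Mathlib

/-!
Write `z_k = x + r_k v_k` with `v_k → z`. Since `‖x‖ = 1`, `(‖z_k‖² - 1) / r_k = ⟪v_k, z_k + x⟫`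
tends to `2⟪z, x⟫ = 0`, so `‖z_k‖ = 1 + o(r_k)` and normalizing `z_k` moves it only by `o(r_k)`.
Conversely, for unit vectors `y_k` one has `⟪x, y_k - x⟫ = -‖y_k - x‖² / 2 = O(r_k²)`, so blow-ups
of the sphere lie in `x^⊥`. Closed blow-up limits of a set `F` consist exactly of the limits of
rescaled sequences `(y_k - x) / r_k` with `y_k ∈ F`, and normalization keeps a point of the cone `E`
inside `E`; together these give the equality of the two blow-ups on `x^⊥`.
-/

open Metric Filter
open scoped RealInnerProductSpace Topology

noncomputable section

/-- `Z` is the local Hausdorff limit of the sets (F − x)/r_k, along the sequence of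
radii `r`. -/
def BlowUpAlong {X : Type*} [NormedAddCommGroup X] [NormedSpace ℝ X]
    (r : ℕ → ℝ) (F : Set X) (x : X) (Z : Set X) : Prop :=
  ∀ R > (0:ℝ), ∀ ε > (0:ℝ), ∀ᶠ k in Filter.atTop,
    (∀ y ∈ F, ‖y - x‖ ≤ R * r k → ∃ z ∈ Z, ‖(r k)⁻¹ • (y - x) - z‖ ≤ ε) ∧
    (∀ z ∈ Z, ‖z‖ ≤ R → ∃ y ∈ F, ‖(r k)⁻¹ • (y - x) - z‖ ≤ ε)

theorem tendsto_of_tendsto_inv_smul_sub {X ι : Type*} [NormedAddCommGroup X] [NormedSpace ℝ X]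
    {l : Filter ι} {r : ι → ℝ} {x p : X} {y : ι → X}
    (hr0 : Tendsto r l (𝓝 0)) (hr : ∀ᶠ k in l, r k ≠ 0)
    (hy : Tendsto (fun k => (r k)⁻¹ • (y k - x)) l (𝓝 p)) :
    Tendsto y l (𝓝 x) := by
  have hlim := (hr0.smul hy).add_const x
  rw [zero_smul, zero_add] at hlim
  refine hlim.congr' ?_
  filter_upwards [hr] with k hk
  rw [smul_inv_smul₀ hk, sub_add_cancel]

section InnerProductSpace

variable {X ι : Type*} [NormedAddCommGroup X] [InnerProductSpace ℝ X]
  {l : Filter ι} {r : ι → ℝ} {x p : X} {y : ι → X}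

theorem tendsto_norm_sub_one_div (hx : ‖x‖ = 1) (hp : ⟪p, x⟫ = 0)
    (hr0 : Tendsto r l (𝓝 0)) (hr : ∀ᶠ k in l, r k ≠ 0)
    (hy : Tendsto (fun k => (r k)⁻¹ • (y k - x)) l (𝓝 p)) :
    Tendsto (fun k => (‖y k‖ - 1) / r k) l (𝓝 0) := by
  have hyx := tendsto_of_tendsto_inv_smul_sub hr0 hr hy
  have hlim := (hy.inner (hyx.add_const x)).div (hyx.norm.add_const 1) (by positivity)
  rw [inner_add_right, hp, add_zero, zero_div] at hlim
  refine hlim.congr fun k => ?_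
  have hsq : ⟪y k - x, y k + x⟫ = ‖y k‖ ^ 2 - 1 := by
    rw [inner_sub_left, inner_add_right, inner_add_right, real_inner_self_eq_norm_sq,
      real_inner_self_eq_norm_sq, real_inner_comm x, hx]
    ring
  have hpos : 0 < ‖y k‖ + 1 := by positivity
  rw [Pi.div_apply, real_inner_smul_left, hsq]
  field_simp
  ring

theorem tendsto_inv_smul_normalize_sub (hx : ‖x‖ = 1) (hp : ⟪p, x⟫ = 0)
    (hr0 : Tendsto r l (𝓝 0)) (hr : ∀ᶠ k in l, r k ≠ 0)
    (hy : Tendsto (fun k => (r k)⁻¹ • (y k - x)) l (𝓝 p)) :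
    Tendsto (fun k => (r k)⁻¹ • (‖y k‖⁻¹ • y k - x)) l (𝓝 p) := by
  have hyx := tendsto_of_tendsto_inv_smul_sub hr0 hr hy
  have hinv : Tendsto (fun k => ‖y k‖⁻¹) l (𝓝 1) := by
    simpa [hx] using hyx.norm.inv₀ (by simp [hx])
  have hlim := (hinv.smul hy).sub
    (((tendsto_norm_sub_one_div hx hp hr0 hr hy).mul hinv).smul_const x)
  rw [one_smul, zero_mul, zero_smul, sub_zero] at hlim
  refine hlim.congr' ?_
  filter_upwards [hyx.norm.eventually_ne (by simp [hx] : ‖x‖ ≠ 0)] with k hk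
  match_scalars
  · field_simp
  · field_simp
    ring

theorem inner_eq_zero_of_tendsto_inv_smul_sub [l.NeBot] (hx : ‖x‖ = 1)
    (hr0 : Tendsto r l (𝓝 0)) (hy1 : ∀ᶠ k in l, ‖y k‖ = 1)
    (hy : Tendsto (fun k => (r k)⁻¹ • (y k - x)) l (𝓝 p)) :
    ⟪x, p⟫ = 0 := by
  have hlim := ((hr0.div_const 2).neg.mul (hy.norm.pow 2))
  rw [zero_div, neg_zero, zero_mul] at hlim
  refine tendsto_nhds_unique (tendsto_const_nhds.inner hy) (hlim.congr' ?_)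
  filter_upwards [hy1] with k hk
  have hsq : ⟪x, y k - x⟫ = -‖y k - x‖ ^ 2 / 2 := by
    rw [inner_sub_right, real_inner_self_eq_norm_sq, norm_sub_sq_real, hk, hx, real_inner_comm]
    ring
  rw [real_inner_smul_right, hsq, norm_smul, Real.norm_eq_abs, mul_pow, sq_abs]
  rcases eq_or_ne (r k) 0 with h | h
  · simp [h]
  · field_simp

end InnerProductSpace

namespace BlowUpAlong

variable {X : Type*} [NormedAddCommGroup X] [NormedSpace ℝ X]
  {r : ℕ → ℝ} {F Z : Set X} {x p : X}

theorem mem_of_tendsto (h : BlowUpAlong r F x Z) (hZ : IsClosed Z) (hr : ∀ k, 0 < r k)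
    {y : ℕ → X} (hyF : ∀ᶠ k in atTop, y k ∈ F)
    (hy : Tendsto (fun k => (r k)⁻¹ • (y k - x)) atTop (𝓝 p)) :
    p ∈ Z := by
  rw [← hZ.closure_eq, Metric.mem_closure_iff]
  intro ε hε
  have hnear : ∀ᶠ k in atTop, dist ((r k)⁻¹ • (y k - x)) p < ε / 2 :=
    hy (ball_mem_nhds p (half_pos hε))
  obtain ⟨k, hk, hyk, hblow⟩ :=
    (hnear.and (hyF.and (h (‖p‖ + ε) (by positivity) (ε / 2) (half_pos hε)))).exists
  have hscaled : ‖(r k)⁻¹ • (y k - x)‖ ≤ ‖p‖ + ε := by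
    have := norm_le_norm_add_norm_sub' ((r k)⁻¹ • (y k - x)) p
    rw [← dist_eq_norm] at this
    linarith
  have hyx : ‖y k - x‖ ≤ (‖p‖ + ε) * r k := by
    rwa [norm_smul, norm_inv, Real.norm_of_nonneg (hr k).le, inv_mul_le_iff₀ (hr k),
      mul_comm] at hscaled
  obtain ⟨w, hw, hvw⟩ := hblow.1 (y k) hyk hyx
  refine ⟨w, hw, ?_⟩
  calc dist p w ≤ dist p ((r k)⁻¹ • (y k - x)) + dist ((r k)⁻¹ • (y k - x)) w :=
        dist_triangle _ _ _
    _ < ε := by rw [dist_comm, dist_eq_norm _ w]; linarith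

theorem exists_tendsto (h : BlowUpAlong r F x Z) (hp : p ∈ Z) :
    ∃ y : ℕ → X, (∀ k, y k ∈ F) ∧ Tendsto (fun k => (r k)⁻¹ • (y k - x)) atTop (𝓝 p) := by
  set S : ℕ → Set X := fun k => (fun y => (r k)⁻¹ • (y - x)) '' F
  have hclose : ∀ ε > 0, ∀ᶠ k in atTop, ∃ y ∈ F, ‖(r k)⁻¹ • (y - x) - p‖ ≤ ε := fun ε hε =>
    (h (‖p‖ + 1) (by positivity) ε hε).mono fun k hk => hk.2 p hp (by linarith)
  obtain ⟨y₀, hy₀⟩ : F.Nonempty :=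
    let ⟨_, y, hy, _⟩ := (hclose 1 one_pos).exists
    ⟨y, hy⟩
  have hinf : Tendsto (fun k => infDist p (S k)) atTop (𝓝 0) := by
    refine Metric.tendsto_nhds.2 fun ε hε => ?_
    filter_upwards [hclose (ε / 2) (half_pos hε)] with k ⟨y, hy, hyp⟩
    have hle : infDist p (S k) ≤ ε / 2 := by
      rw [← dist_eq_norm, dist_comm] at hyp
      exact (infDist_le_dist_of_mem (Set.mem_image_of_mem _ hy)).trans hyp
    rw [Real.dist_0_eq_abs, abs_of_nonneg infDist_nonneg]
    linarith
  have hchoice : ∀ k : ℕ, ∃ y ∈ F,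
      dist p ((r k)⁻¹ • (y - x)) < infDist p (S k) + 1 / (k + 1) := fun k => by
    obtain ⟨_, ⟨y, hy, rfl⟩, hd⟩ := (infDist_lt_iff (Set.Nonempty.image _ ⟨y₀, hy₀⟩)).1
      (lt_add_of_pos_right (infDist p (S k)) (Nat.one_div_pos_of_nat : (0 : ℝ) < 1 / (k + 1)))
    exact ⟨y, hy, hd⟩
  choose y hyF hy using hchoice
  have hbound := hinf.add tendsto_one_div_add_atTop_nhds_zero_nat
  rw [zero_add] at hbound
  refine ⟨y, hyF, tendsto_iff_dist_tendsto_zero.2 (squeeze_zero (fun _ => dist_nonneg)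
    (fun k => ?_) hbound)⟩
  rw [dist_comm]
  exact (hy k).le

end BlowUpAlong

theorem BlowUpAlong.mem_of_tendsto_of_cone {X : Type*} [NormedAddCommGroup X]
    [InnerProductSpace ℝ X] {r : ℕ → ℝ} {E Z : Set X} {x p : X} {y : ℕ → X}
    (h : BlowUpAlong r (E ∩ sphere 0 1) x Z) (hZ : IsClosed Z)
    (hcone : ∀ y ∈ E, ∀ t : ℝ, 0 ≤ t → t • y ∈ E) (hx : ‖x‖ = 1) (hp : ⟪p, x⟫ = 0)
    (hr : ∀ k, 0 < r k) (hr0 : Tendsto r atTop (𝓝 0)) (hyE : ∀ k, y k ∈ E)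
    (hy : Tendsto (fun k => (r k)⁻¹ • (y k - x)) atTop (𝓝 p)) :
    p ∈ Z := by
  have hr' : ∀ᶠ k in atTop, r k ≠ 0 := Eventually.of_forall fun k => (hr k).ne'
  refine h.mem_of_tendsto hZ hr ?_ (tendsto_inv_smul_normalize_sub hx hp hr0 hr' hy)
  have hx0 : x ≠ 0 := norm_ne_zero_iff.1 (by simp [hx])
  filter_upwards [(tendsto_of_tendsto_inv_smul_sub hr0 hr' hy).eventually_ne hx0] with k hk
  exact ⟨hcone _ (hyE k) _ (by positivity), by simpa using norm_smul_inv_norm (𝕜 := ℝ) hk⟩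

theorem stmt17_general (n : ℕ) (E : Set (EuclideanSpace ℝ (Fin n)))
    (hcone : ∀ y ∈ E, ∀ t : ℝ, 0 ≤ t → t • y ∈ E)
    (x : EuclideanSpace ℝ (Fin n)) (hx : ‖x‖ = 1)
    (z : EuclideanSpace ℝ (Fin n)) (hz : ⟪z, x⟫ = 0)
    (zk : ℕ → EuclideanSpace ℝ (Fin n)) (hzk : ∀ k, zk k ∈ E)
    (r : ℕ → ℝ) (hr : ∀ k, 0 < r k) (hr0 : Tendsto r atTop (nhds 0))
    (hconv : Tendsto (fun k => (r k)⁻¹ • (zk k - x)) atTop (nhds z)) :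
    Tendsto (fun k => (‖zk k‖ - 1) / r k) atTop (nhds 0) ∧
    Tendsto (fun k => (r k)⁻¹ • ((‖zk k‖)⁻¹ • zk k - x)) atTop (nhds z) ∧
    (∀ Z : Set (EuclideanSpace ℝ (Fin n)), IsClosed Z →
      BlowUpAlong r (E ∩ sphere 0 1) x Z → z ∈ Z) ∧
    (∀ Z Z' : Set (EuclideanSpace ℝ (Fin n)), IsClosed Z → IsClosed Z' →
      BlowUpAlong r E x Z → BlowUpAlong r (E ∩ sphere 0 1) x Z' →
      Z' = Z ∩ {p | ⟪x, p⟫ = 0}) := by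
  have hr' : ∀ᶠ k in atTop, r k ≠ 0 := Eventually.of_forall fun k => (hr k).ne'
  refine ⟨tendsto_norm_sub_one_div hx hz hr0 hr' hconv,
    tendsto_inv_smul_normalize_sub hx hz hr0 hr' hconv,
    fun Z hZ hK => hK.mem_of_tendsto_of_cone hZ hcone hx hz hr hr0 hzk hconv, ?_⟩
  intro Z Z' hZ hZ' hE hK
  ext p
  constructor
  · intro hp
    obtain ⟨y, hyK, hy⟩ := hK.exists_tendsto hp
    exact ⟨hE.mem_of_tendsto hZ hr (Eventually.of_forall fun k => (hyK k).1) hy,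
      inner_eq_zero_of_tendsto_inv_smul_sub hx hr0
        (Eventually.of_forall fun k => mem_sphere_zero_iff_norm.1 (hyK k).2) hy⟩
  · rintro ⟨hp, hpx⟩
    obtain ⟨y, hyE, hy⟩ := hE.exists_tendsto hp
    exact hK.mem_of_tendsto_of_cone hZ' hcone hx (by rwa [real_inner_comm]) hr hr0 hyE hy

/-- let E ⊆ ℝⁿ be a cone centered at 0 and x ∈ E with ‖x‖ = 1. If z_k ∈ E,
r_k → 0 (r_k > 0) and (z_k − x)/r_k → z with z ⊥ x, then (‖z_k‖ − 1)/r_k → 0, and hence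
(z_k/‖z_k‖ − x)/r_k → z; in particular z belongs to every (closed) blow-up limit of
K = E ∩ Sⁿ⁻¹ at x along the sequence r_k, and any blow-up limit of E at x along r_k,
intersected with the tangent space x^⊥, equals the corresponding blow-up limit of K. -/
theorem stmt17 (n : ℕ) (E : Set (EuclideanSpace ℝ (Fin n)))
    (hcone : ∀ y ∈ E, ∀ t : ℝ, 0 ≤ t → t • y ∈ E)
    (x : EuclideanSpace ℝ (Fin n)) (hxE : x ∈ E) (hx : ‖x‖ = 1)
    (z : EuclideanSpace ℝ (Fin n)) (hz : ⟪z, x⟫ = 0)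
    (zk : ℕ → EuclideanSpace ℝ (Fin n)) (hzk : ∀ k, zk k ∈ E)
    (r : ℕ → ℝ) (hr : ∀ k, 0 < r k) (hr0 : Tendsto r atTop (nhds 0))
    (hconv : Tendsto (fun k => (r k)⁻¹ • (zk k - x)) atTop (nhds z)) :
    Tendsto (fun k => (‖zk k‖ - 1) / r k) atTop (nhds 0) ∧
    Tendsto (fun k => (r k)⁻¹ • ((‖zk k‖)⁻¹ • zk k - x)) atTop (nhds z) ∧
    (∀ Z : Set (EuclideanSpace ℝ (Fin n)), IsClosed Z →
      BlowUpAlong r (E ∩ sphere 0 1) x Z → z ∈ Z) ∧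
    (∀ Z Z' : Set (EuclideanSpace ℝ (Fin n)), IsClosed Z → IsClosed Z' →
      BlowUpAlong r E x Z → BlowUpAlong r (E ∩ sphere 0 1) x Z' →
      Z' = Z ∩ {p | ⟪x, p⟫ = 0}) :=
  stmt17_general n E hcone x hx z hz zk hzk r hr hr0 hconv

end
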